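/- arXiv:2208.10198 — 4 statements merged into one kernel-verified Lean document; each statement's English description precedes it below -/
import Mathlib

section
/- Let λ, μ, ν > 0 with λ < μ and λ+ν ≠ μ, and let π_{n,j} be as in the s̄ = 1 Poisson controller stationary distribution (π_{n,0} = (λ/(λ+ν))^n π_{0,0}, π_{n,1} = [(λ/ν + (λ+ν)/(λ+ν-μ))(λ/μ)^n - ((λ+ν)/(λ+ν-μ))(λ/(λ+ν))^n] π_{0,0}, with π_{0,0} = ν(μ-λ)/(μ(2λ+ν))). Then ∑_{n≥1} π_{n,1} = λ/μ. -/
/-! Both tails are geometric: with `a = λ/μ` and `b = λ/(λ+ν)` one has `a/(1-a) = λ/(μ-λ)` and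
`b/(1-b) = λ/ν`. In the combination the coefficient `(λ+ν)/(λ+ν-μ)` multiplies
`λ/(μ-λ) - λ/ν = λ(λ+ν-μ)/(ν(μ-λ))`, so the singular factor `λ+ν-μ` cancels, and the sum becomes
`λ(2λ+ν)/(ν(μ-λ))`; multiplying by `π₀₀` gives `λ/μ`. -/

theorem hasSum_geometric_succ_of_norm_lt_one {K : Type*} [NormedDivisionRing K]
    {r : K} (hr : ‖r‖ < 1) : HasSum (fun n : ℕ ↦ r ^ (n + 1)) (r * (1 - r)⁻¹) := by
  simpa only [pow_succ'] using (hasSum_geometric_of_norm_lt_one hr).mul_left r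

theorem div_mul_inv_one_sub_div {K : Type*} [Field K] {x y : K} (hy : y ≠ 0) (hxy : y - x ≠ 0) :
    x / y * (1 - x / y)⁻¹ = x / (y - x) := by
  field_simp

theorem hasSum_div_pow_succ {x y : ℝ} (hx : 0 ≤ x) (hxy : x < y) :
    HasSum (fun n : ℕ ↦ (x / y) ^ (n + 1)) (x / (y - x)) := by
  have hy : 0 < y := hx.trans_lt hxy
  have hr : ‖x / y‖ < 1 := by
    rw [Real.norm_of_nonneg (div_nonneg hx hy.le)]
    exact (div_lt_one hy).mpr hxy
  rw [← div_mul_inv_one_sub_div hy.ne' (sub_ne_zero.mpr hxy.ne')]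
  exact hasSum_geometric_succ_of_norm_lt_one hr

theorem stmt_9_general (lam mu nu : ℝ) (hlam : 0 < lam) (hnu : 0 < nu)
    (hstab : lam < mu) (hne : lam + nu ≠ mu) :
    let π₀₀ : ℝ := nu * (mu - lam) / (mu * (2 * lam + nu))
    let π1 : ℕ → ℝ := fun n =>
      ((lam / nu + (lam + nu) / (lam + nu - mu)) * (lam / mu) ^ n -
        ((lam + nu) / (lam + nu - mu)) * (lam / (lam + nu)) ^ n) * π₀₀
    ∑' n : ℕ, π1 (n + 1) = lam / mu := by
  intro π₀₀ π1
  set c := (lam + nu) / (lam + nu - mu)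
  have hsum_a := hasSum_div_pow_succ hlam.le hstab
  have hsum_b := hasSum_div_pow_succ hlam.le (lt_add_of_pos_right lam hnu)
  rw [add_sub_cancel_left] at hsum_b
  have hsum : HasSum (fun n ↦ π1 (n + 1))
      (((lam / nu + c) * (lam / (mu - lam)) - c * (lam / nu)) * π₀₀) :=
    ((hsum_a.mul_left _).sub (hsum_b.mul_left _)).mul_right π₀₀
  have hgap : mu - lam ≠ 0 := sub_ne_zero.mpr hstab.ne'
  have hcancel : c * (lam / (mu - lam) - lam / nu) = (lam + nu) * lam / (nu * (mu - lam)) := by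
    have : lam + nu - mu ≠ 0 := sub_ne_zero.mpr hne
    simp only [c]
    field_simp
    ring
  rw [hsum.tsum_eq]
  calc ((lam / nu + c) * (lam / (mu - lam)) - c * (lam / nu)) * π₀₀
      = (lam / nu * (lam / (mu - lam)) + c * (lam / (mu - lam) - lam / nu)) * π₀₀ := by ring
    _ = lam / mu := by
      rw [hcancel]
      simp only [π₀₀]
      field_simp
      ring

theorem stmt_9 (lam mu nu : ℝ) (hlam : 0 < lam) (hmu : 0 < mu) (hnu : 0 < nu)
    (hstab : lam < mu) (hne : lam + nu ≠ mu) :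
    let π₀₀ : ℝ := nu * (mu - lam) / (mu * (2 * lam + nu))
    let π1 : ℕ → ℝ := fun n =>
      ((lam / nu + (lam + nu) / (lam + nu - mu)) * (lam / mu) ^ n -
        ((lam + nu) / (lam + nu - mu)) * (lam / (lam + nu)) ^ n) * π₀₀
    ∑' n : ℕ, π1 (n + 1) = lam / mu :=
  stmt_9_general lam mu nu hlam hnu hstab hne
end

section
/- Let λ, μ, ν > 0 with λ < μ and λ+ν ≠ μ. With the stationary probabilities of the s̄ = 1 Poisson controller model as above, P(S=0) := ∑_{n≥0} π_{n,0} = (μ-λ)(λ+ν)/(μ(2λ+ν)) and P(S=1) := ∑_{n≥0} π_{n,1} = λ(λ+μ+ν)/(μ(2λ+ν)). -/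
/-! Both marginals are finite combinations of the geometric series with ratios `λ/(λ+ν)` and
`λ/μ`, which lie in `[0, 1)` because `ν > 0` and `λ < μ`; summing them leaves a rational
identity in `λ, μ, ν`, whose denominators `ν`, `μ - λ` and `λ + ν - μ` are nonzero. -/

theorem hasSum_geometric_sub_geometric {r s : ℝ} (hr₀ : 0 ≤ r) (hr₁ : r < 1) (hs₀ : 0 ≤ s)
    (hs₁ : s < 1) (a b : ℝ) :
    HasSum (fun n : ℕ => a * r ^ n - b * s ^ n) (a * (1 - r)⁻¹ - b * (1 - s)⁻¹) :=
  ((hasSum_geometric_of_lt_one hr₀ hr₁).mul_left a).sub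
    ((hasSum_geometric_of_lt_one hs₀ hs₁).mul_left b)

theorem stmt_10 (lam mu nu : ℝ) (hlam : 0 < lam) (hmu : 0 < mu) (hnu : 0 < nu)
    (hstab : lam < mu) (hne : lam + nu ≠ mu) :
    let π₀₀ : ℝ := nu * (mu - lam) / (mu * (2 * lam + nu))
    let π0 : ℕ → ℝ := fun n => (lam / (lam + nu)) ^ n * π₀₀
    let π1 : ℕ → ℝ := fun n =>
      ((lam / nu + (lam + nu) / (lam + nu - mu)) * (lam / mu) ^ n -
        ((lam + nu) / (lam + nu - mu)) * (lam / (lam + nu)) ^ n) * π₀₀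
    (∑' n : ℕ, π0 n = (mu - lam) * (lam + nu) / (mu * (2 * lam + nu))) ∧
    (∑' n : ℕ, π1 n = lam * (lam + mu + nu) / (mu * (2 * lam + nu))) := by
  intro π₀₀ π0 π1
  have hρ₀ : 0 ≤ lam / (lam + nu) := by positivity
  have hρ₁ : lam / (lam + nu) < 1 := (div_lt_one (by positivity)).2 (by linarith)
  have hσ₀ : 0 ≤ lam / mu := by positivity
  have hσ₁ : lam / mu < 1 := (div_lt_one hmu).2 hstab
  have hsum₀ : HasSum π0 ((1 - lam / (lam + nu))⁻¹ * π₀₀) :=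
    (hasSum_geometric_of_lt_one hρ₀ hρ₁).mul_right π₀₀
  have hsum₁ := (hasSum_geometric_sub_geometric hσ₀ hσ₁ hρ₀ hρ₁
    (lam / nu + (lam + nu) / (lam + nu - mu)) ((lam + nu) / (lam + nu - mu))).mul_right π₀₀
  have hδ : mu - lam ≠ 0 := sub_ne_zero.2 hstab.ne'
  have hμ : mu ≠ 0 := hmu.ne'
  have hρ : lam + nu ≠ 0 := by positivity
  refine ⟨hsum₀.tsum_eq.trans ?_, hsum₁.tsum_eq.trans ?_⟩ <;>
    simp only [π₀₀, one_sub_div hρ, one_sub_div hμ, add_sub_cancel_left, inv_div]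
  · field_simp
  · field_simp
    ring
end

section
/- Let μ, ν > 0, ρ ≥ 0, and define h(x,y) = ∑_{k=0}^{∞} (ν/(ν+kμ)) (ρ^k/k!) (x-1)^k (y-1)^k. Then for all real x, y, h satisfies the partial differential equation ν h(x,y) + μ(x-1) ∂h/∂x (x,y) = ν e^{ρ(x-1)(y-1)}. -/
/-!
Put `s = x - 1` and `q = ρ (y - 1)`. Then `h(x, y) = ∑ₖ cₖ qᵏ sᵏ / k!` with `cₖ = ν / (ν + k μ) ∈ (0, 1]`,
a power series in `s` dominated by the exponential series, so it is entire and may be differentiated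
termwise. The Euler operator `ν + μ s d/ds` multiplies its `k`-th term by `ν + k μ`, which cancels the
denominator of `cₖ` and leaves `ν` times the exponential series of `q s`.
-/

open Nat

lemma summable_nat_mul_pow_div_factorial_mul_pow (r R : ℝ) :
    Summable fun n : ℕ => n * (r ^ n / n !) * R ^ (n - 1) := by
  rw [← summable_nat_add_iff 1]
  have hshift : (fun n : ℕ => ((n + 1 : ℕ) : ℝ) * (r ^ (n + 1) / (n + 1)!) * R ^ (n + 1 - 1)) =
      fun n : ℕ => r * ((r * R) ^ n / n !) := by
    funext n
    simp only [Nat.add_sub_cancel, Nat.factorial_succ, Nat.cast_mul, mul_pow]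
    field_simp
    ring
  rw [hshift]
  exact (Real.summable_pow_div_factorial _).mul_left r

lemma mul_nat_mul_pow_pred {R : Type*} [CommSemiring R] (s : R) (n : ℕ) :
    s * (n * s ^ (n - 1)) = n * s ^ n := by
  cases n with
  | zero => simp
  | succ n => simp only [Nat.add_sub_cancel, pow_succ]; ring

section ExpBoundedSeries

variable {b : ℕ → ℝ} {r : ℝ}

lemma summable_mul_pow_of_abs_le_pow_div_factorial (hb : ∀ n, |b n| ≤ r ^ n / n !) (s : ℝ) :
    Summable fun n => b n * s ^ n := by
  refine .of_norm_bounded (Real.summable_pow_div_factorial (r * |s|)) fun n => ?_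
  rw [Real.norm_eq_abs, abs_mul, abs_pow, mul_pow]
  calc |b n| * |s| ^ n ≤ r ^ n / n ! * |s| ^ n := by gcongr; exact hb n
    _ = r ^ n * |s| ^ n / n ! := by ring

lemma norm_mul_nat_mul_pow_pred_le (hb : ∀ n, |b n| ≤ r ^ n / n !) (n : ℕ) {t R : ℝ}
    (ht : |t| ≤ R) : ‖b n * (n * t ^ (n - 1))‖ ≤ n * (r ^ n / n !) * R ^ (n - 1) := by
  rw [Real.norm_eq_abs, abs_mul, abs_mul, abs_pow, Nat.abs_cast]
  calc |b n| * (n * |t| ^ (n - 1)) ≤ r ^ n / n ! * (n * R ^ (n - 1)) :=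
        mul_le_mul (hb n) (by gcongr) (by positivity) ((abs_nonneg _).trans (hb n))
    _ = n * (r ^ n / n !) * R ^ (n - 1) := by ring

lemma summable_mul_nat_mul_pow_pred_of_abs_le_pow_div_factorial
    (hb : ∀ n, |b n| ≤ r ^ n / n !) (s : ℝ) :
    Summable fun n => b n * (n * s ^ (n - 1)) :=
  .of_norm_bounded (summable_nat_mul_pow_div_factorial_mul_pow r |s|)
    fun n => norm_mul_nat_mul_pow_pred_le hb n le_rfl

lemma hasDerivAt_tsum_mul_pow_of_abs_le_pow_div_factorial (hb : ∀ n, |b n| ≤ r ^ n / n !)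
    (s : ℝ) :
    HasDerivAt (fun t => ∑' n, b n * t ^ n) (∑' n, b n * (n * s ^ (n - 1))) s := by
  have hball : ∀ t ∈ Metric.ball (0 : ℝ) (|s| + 1), |t| ≤ |s| + 1 := fun t ht =>
    (mem_ball_zero_iff.mp ht).le
  refine hasDerivAt_tsum_of_isPreconnected
    (summable_nat_mul_pow_div_factorial_mul_pow r (|s| + 1)) Metric.isOpen_ball
    (convex_ball _ _).isPreconnected (fun n t _ => ?_)
    (fun n t ht => norm_mul_nat_mul_pow_pred_le hb n (hball t ht))
    (Metric.mem_ball_self (by positivity)) (summable_mul_pow_of_abs_le_pow_div_factorial hb 0)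
    (by simp)
  simpa using (hasDerivAt_pow n t).const_mul (b n)

lemma tsum_euler_operator_of_abs_le_pow_div_factorial (hb : ∀ n, |b n| ≤ r ^ n / n !)
    (a c s : ℝ) :
    a * ∑' n, b n * s ^ n + c * s * ∑' n, b n * (n * s ^ (n - 1)) =
      ∑' n, (a + n * c) * b n * s ^ n := by
  rw [← tsum_mul_left, ← tsum_mul_left, ← Summable.tsum_add
    ((summable_mul_pow_of_abs_le_pow_div_factorial hb s).mul_left a)
    ((summable_mul_nat_mul_pow_pred_of_abs_le_pow_div_factorial hb s).mul_left (c * s))]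
  exact tsum_congr fun n => by linear_combination (c * b n) * mul_nat_mul_pow_pred s n

end ExpBoundedSeries

theorem stmt_13_general (mu nu ρ : ℝ) (hmu : 0 < mu) (hnu : 0 < nu) :
    let h : ℝ → ℝ → ℝ := fun x y =>
      ∑' k : ℕ, (nu / (nu + k * mu)) * (ρ ^ k / (Nat.factorial k)) *
        (x - 1) ^ k * (y - 1) ^ k
    ∀ x y : ℝ,
      nu * h x y + mu * (x - 1) * deriv (fun t => h t y) x =
        nu * Real.exp (ρ * (x - 1) * (y - 1)) := by
  intro h x y
  set q := ρ * (y - 1)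
  have hden : ∀ n : ℕ, 0 < nu + n * mu := fun n => by positivity
  set b : ℕ → ℝ := fun n => nu / (nu + n * mu) * (q ^ n / n !)
  have hb : ∀ n, |b n| ≤ |q| ^ n / n ! := fun n => by
    rw [abs_mul, abs_div, abs_div, abs_pow, Nat.abs_cast, abs_of_pos hnu, abs_of_pos (hden n)]
    exact mul_le_of_le_one_left (by positivity)
      ((div_le_one (hden n)).mpr (le_add_of_nonneg_right (by positivity)))
  have hh : (fun t => h t y) = fun t => ∑' n, b n * (t - 1) ^ n := by
    funext t
    exact tsum_congr fun n => by simp only [b, q, mul_pow]; ring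
  have hderiv : deriv (fun t => h t y) x = ∑' n, b n * (n * (x - 1) ^ (n - 1)) := by
    rw [hh]
    exact ((hasDerivAt_tsum_mul_pow_of_abs_le_pow_div_factorial hb _).comp_sub_const x 1).deriv
  rw [congrFun hh x, hderiv, tsum_euler_operator_of_abs_le_pow_div_factorial hb,
    show ρ * (x - 1) * (y - 1) = q * (x - 1) by ring, Real.exp_eq_exp_ℝ,
    NormedSpace.exp_eq_tsum_div, ← tsum_mul_left]
  refine tsum_congr fun n => ?_
  simp only [b, mul_pow]
  field_simp [(hden n).ne']

theorem stmt_13 (mu nu ρ : ℝ) (hmu : 0 < mu) (hnu : 0 < nu) (hρ : 0 ≤ ρ) :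
    let h : ℝ → ℝ → ℝ := fun x y =>
      ∑' k : ℕ, (nu / (nu + k * mu)) * (ρ ^ k / (Nat.factorial k)) *
        (x - 1) ^ k * (y - 1) ^ k
    ∀ x y : ℝ,
      nu * h x y + mu * (x - 1) * deriv (fun t => h t y) x =
        nu * Real.exp (ρ * (x - 1) * (y - 1)) :=
  stmt_13_general mu nu ρ hmu hnu
end

section
/- Let λ, μ, ν > 0 and j a positive integer, with β = β_j(ν) ∈ (0,1) the smaller root of λz² - (λ+ν+jμ)z + jμ = 0, and β̃ = λβ/(jμ). Define f_j(z) = ν β̃ (∑_{k=0}^{j} c_{k,j} z^k) / (λ(1 - β̃ z)) with c_{k,j} as above. Then f_j satisfies the functional equation (λz² - (λ+ν+jμ)z + jμ) f_j(z) = jμ(1-z) p_j(0) - ν z^{j+1} for all real z with β̃ z ≠ 1, where p_j(0) = ν β^{j+1} / (jμ(1-β)). -/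
/-!
Since `β` is a root of `Q(z) = λz² - (λ+ν+jμ)z + jμ`, Vieta gives the other root `1/β̃`, so
`Q(z) = (jμ/β)(β - z)(1 - β̃z)` and the pole of `f_j` cancels: `Q f_j = ν(β - z) S(z)` with
`S(z) = ∑ c_{k,j} zᵏ`. Apart from the term `k = 0`, `S` is a geometric sum, which telescopes to
`(β - z) S(z) (1 - β) = β^{j+1}(1 - z) - z^{j+1}(1 - β)`.
-/

open Finset

lemma quadratic_eq_mul_of_root {K : Type*} [Field K] {lam b a β βt : K} (ha : a ≠ 0)
    (hβ : β ≠ 0) (hroot : lam * β ^ 2 - b * β + a = 0) (hβt : βt = lam * β / a) (z : K) :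
    lam * z ^ 2 - b * z + a = a / β * (β - z) * (1 - βt * z) := by
  subst hβt
  field_simp
  linear_combination z * hroot

lemma sum_range_succ_ite_geom {K : Type*} [Field K] (β z : K) (j : ℕ) :
    ∑ k ∈ range (j + 1),
        (if k = 0 then β ^ j / (1 - β) else if k ≤ j then β ^ (j - k) else 0) * z ^ k =
      β ^ j / (1 - β) + z * ∑ k ∈ range j, z ^ k * β ^ (j - 1 - k) := by
  rw [sum_range_succ', mul_sum]
  refine (add_comm _ _).trans (congrArg₂ _ (by simp) (sum_congr rfl fun k hk => ?_))
  have hkj : k + 1 ≤ j := mem_range.mp hk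
  rw [if_neg k.succ_ne_zero, if_pos hkj, show j - (k + 1) = j - 1 - k by omega]
  ring

lemma sub_mul_sum_ite_geom {K : Type*} [Field K] {β : K} (hβ : β ≠ 1) (z : K) (j : ℕ) :
    (β - z) * ∑ k ∈ range (j + 1),
        (if k = 0 then β ^ j / (1 - β) else if k ≤ j then β ^ (j - k) else 0) * z ^ k =
      (β ^ (j + 1) * (1 - z) - z ^ (j + 1) * (1 - β)) / (1 - β) := by
  have h1β : 1 - β ≠ 0 := sub_ne_zero.mpr hβ.symm
  rw [sum_range_succ_ite_geom, eq_div_iff h1β]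
  field_simp
  linear_combination (β - 1) * z * geom_sum₂_mul z β j

theorem stmt_18_general (lam mu nu : ℝ) (hlam : 0 < lam) (hmu : 0 < mu)
    (j : ℕ) (hj : 0 < j) (β : ℝ) (hβ0 : 0 < β) (hβ1 : β < 1)
    (hroot : lam * β ^ 2 - (lam + nu + j * mu) * β + j * mu = 0) :
    let βt : ℝ := lam * β / (j * mu)
    let c : ℕ → ℝ := fun k =>
      if k = 0 then β ^ j / (1 - β)
      else if k ≤ j then β ^ (j - k) else 0
    let f : ℝ → ℝ := fun z =>
      nu * βt * (∑ k ∈ Finset.range (j + 1), c k * z ^ k) / (lam * (1 - βt * z))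
    let pj0 : ℝ := nu * β ^ (j + 1) / (j * mu * (1 - β))
    ∀ z : ℝ, βt * z ≠ 1 →
      (lam * z ^ 2 - (lam + nu + j * mu) * z + j * mu) * f z =
        j * mu * (1 - z) * pj0 - nu * z ^ (j + 1) := by
  intro βt c f pj0 z hz
  have hjmu : (j : ℝ) * mu ≠ 0 := by positivity
  have hpole : 1 - βt * z ≠ 0 := sub_ne_zero.mpr hz.symm
  have hcancel : (lam * z ^ 2 - (lam + nu + j * mu) * z + j * mu) * f z =
      nu * ((β - z) * ∑ k ∈ range (j + 1), c k * z ^ k) := by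
    have hβt : j * mu * βt = lam * β := mul_div_cancel₀ _ hjmu
    simp only [f, quadratic_eq_mul_of_root hjmu hβ0.ne' hroot rfl z]
    rw [mul_div_assoc', div_eq_iff (mul_ne_zero hlam.ne' hpole)]
    field_simp
    linear_combination (β - z) * nu * (∑ k ∈ range (j + 1), c k * z ^ k) * hβt
  rw [hcancel, sub_mul_sum_ite_geom hβ1.ne z j]
  have h1β : 1 - β ≠ 0 := by linarith
  simp only [pj0]
  field_simp

theorem stmt_18 (lam mu nu : ℝ) (hlam : 0 < lam) (hmu : 0 < mu) (hnu : 0 < nu)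
    (j : ℕ) (hj : 0 < j) (β : ℝ) (hβ0 : 0 < β) (hβ1 : β < 1)
    (hroot : lam * β ^ 2 - (lam + nu + j * mu) * β + j * mu = 0) :
    let βt : ℝ := lam * β / (j * mu)
    let c : ℕ → ℝ := fun k =>
      if k = 0 then β ^ j / (1 - β)
      else if k ≤ j then β ^ (j - k) else 0
    let f : ℝ → ℝ := fun z =>
      nu * βt * (∑ k ∈ Finset.range (j + 1), c k * z ^ k) / (lam * (1 - βt * z))
    let pj0 : ℝ := nu * β ^ (j + 1) / (j * mu * (1 - β))
    ∀ z : ℝ, βt * z ≠ 1 →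
      (lam * z ^ 2 - (lam + nu + j * mu) * z + j * mu) * f z =
        j * mu * (1 - z) * pj0 - nu * z ^ (j + 1) :=
  stmt_18_general lam mu nu hlam hmu j hj β hβ0 hβ1 hroot
end
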